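/- arXiv:math/0012243 — 2 statements merged into one kernel-verified Lean document; each statement's English description precedes it below -/
import Mathlib

section
/- Let $J^l_0(\mathbb{C}^k,\mathbb{C}^r)$ denote the space of $l$-jets at the origin, with coordinates $\Lambda = (\Lambda_\alpha)_{|\alpha| \le l}$, $\Lambda_\alpha \in \mathbb{C}^r$, split as $\Lambda = (\Lambda_0, \hat\Lambda)$ where $\hat\Lambda = (\Lambda_\alpha)_{1 \le |\alpha| \le l}$. If $u \in \mathbb{C}[[\Lambda_0]][\hat\Lambda]$ (a polynomial in $\hat\Lambda$ with formal power series coefficients in $\Lambda_0$) satisfies $u(j^l_x F) = 0$ in $\mathbb{C}[[x]]$ for every formal power series map $F : (\mathbb{C}^k,0) \to (\mathbb{C}^r,0)$, where $j^l_x F = (\partial^\nu F(x))_{|\nu| \le l}$, then $u = 0$. -/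
open MvPowerSeries

noncomputable def fsubst {σ τ : Type*} [Fintype σ] [DecidableEq σ]
    (a : σ → MvPowerSeries τ ℂ) (f : MvPowerSeries σ ℂ) : MvPowerSeries τ ℂ :=
  fun e => MvPowerSeries.coeff e
    (∑ m ∈ Finset.Iic (Finsupp.equivFunOnFinite.symm fun _ => (e.sum fun _ x => x)),
      MvPowerSeries.coeff m f • ∏ s : σ, (a s) ^ m s)

noncomputable def iterD {σ : Type*} (ν : σ →₀ ℕ) (f : MvPowerSeries σ ℂ) :
    MvPowerSeries σ ℂ :=
  fun m => ((ν.prod fun s e => Nat.descFactorial (m s + e) e : ℕ) : ℂ) *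
    MvPowerSeries.coeff (m + ν) f

/-- The index set of the coordinates `Λ_α`, `|α| ≤ l`, of the jet space `J^l_0(ℂ^k, ℂ)`. -/
abbrev JIdx (k l : ℕ) : Type := {ν : Fin k →₀ ℕ // (ν.sum fun _ e => e) ≤ l}

instance (k l : ℕ) : Finite (JIdx k l) := by
  have h : {ν : Fin k →₀ ℕ | (ν.sum fun _ e => e) ≤ l}.Finite := by
    apply Set.Finite.subset
      (Finset.finite_toSet (Finset.Iic (Finsupp.equivFunOnFinite.symm fun _ => l)))
    intro ν hν
    simp only [Finset.coe_Iic, Set.mem_Iic]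
    intro i
    refine le_trans ?_ hν
    by_cases hi : i ∈ ν.support
    · exact Finset.single_le_sum (f := fun j => ν j) (fun _ _ => Nat.zero_le _) hi
    · simp [Finsupp.notMem_support_iff.mp hi]
  exact h.to_subtype

noncomputable instance (k l : ℕ) : Fintype (JIdx k l) := Fintype.ofFinite _

instance (k l : ℕ) : DecidableEq (JIdx k l) := Subtype.instDecidableEq

/-- The index set of the higher-order jet coordinates `Λ̂ = (Λ_ν)_{1 ≤ |ν| ≤ l}`. -/
abbrev HatIdx (k l : ℕ) : Type :=
  {ν : Fin k →₀ ℕ // 1 ≤ (ν.sum fun _ e => e) ∧ (ν.sum fun _ e => e) ≤ l}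

instance (k l : ℕ) : Finite (HatIdx k l) :=
  Finite.of_injective (fun ν => (⟨ν.1, ν.2.2⟩ : JIdx k l))
    (fun a b h => Subtype.ext (by simpa using congrArg Subtype.val h))

noncomputable instance (k l : ℕ) : Fintype (HatIdx k l) := Fintype.ofFinite _

instance (k l : ℕ) : DecidableEq (HatIdx k l) := Subtype.instDecidableEq

/-- The ring `ℂ[[Λ₀]][Λ̂]` of polynomials in the higher-order jet coordinates with
formal power series coefficients in the zeroth-order jet coordinates. -/
abbrev MixJet (k r l : ℕ) : Type :=
  MvPolynomial (HatIdx k l × Fin r) (MvPowerSeries (Fin r) ℂ)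

/-- The value `u(j^l_x F)` of `u ∈ ℂ[[Λ₀]][Λ̂]` on the `l`-jet
`j^l_x F = (∂^ν F(x))_{|ν| ≤ l}` of a formal map `F : (ℂ^k,0) → (ℂ^r,0)`:
the zeroth-order coordinates are substituted by `F` and the hat coordinate of index
`(ν, i)` is substituted by `∂^ν F_i`. -/
noncomputable def jetEval {k r l : ℕ} (u : MixJet k r l)
    (F : Fin r → MvPowerSeries (Fin k) ℂ) : MvPowerSeries (Fin k) ℂ :=
  ∑ m ∈ u.support,
    fsubst F (MvPolynomial.coeff m u) *
      (m.prod fun p e => (iterD (p.1.1 : Fin k →₀ ℕ) (F p.2)) ^ e)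

/-!
If `u` vanishes on all jets, so does each of its partial derivatives, in the jet coordinates
`Λ̂` as well as in `Λ₀`. Indeed, perturb `F` in its `i`-th component by `h` of order `c`. The
first-order Taylor expansion of `F ↦ u(j^l F)` shows that the linear differential operator
`h ↦ ∑_ν (∂u/∂Λ_{ν,i})(j^l F) ∂^ν h` sends `h` to a series of order at least `2 (c - l)`.
Commuting it with multiplication by a coordinate lowers its order, and an operator of order zero
with this property vanishes, so all its coefficients vanish. Finally `u(j^l 0)` is the constant
term of `u`, so repeated differentiation kills every coefficient of `u`.
-/

namespace MvPowerSeries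

section OrderIdeal

variable {σ R : Type*} [CommRing R]

def orderIdeal (n : ℕ) : Ideal (MvPowerSeries σ R) where
  carrier := {f | (n : ℕ∞) ≤ f.order}
  add_mem' hf hg := (le_min hf hg).trans min_order_le_add
  zero_mem' := by simp
  smul_mem' c _ hf := hf.trans (le_add_self.trans le_order_mul)

variable {m n : ℕ} {f g : MvPowerSeries σ R}

theorem mem_orderIdeal_iff :
    f ∈ orderIdeal n ↔ ∀ d : σ →₀ ℕ, d.degree < n → coeff d f = 0 :=
  ⟨fun hf _ hd => coeff_of_lt_order (lt_of_lt_of_le (by exact_mod_cast hd) hf),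
    fun h => nat_le_order h⟩

theorem orderIdeal_zero : orderIdeal 0 = (⊤ : Ideal (MvPowerSeries σ R)) :=
  eq_top_iff.mpr fun f _ => show ((0 : ℕ) : ℕ∞) ≤ f.order by simp

theorem orderIdeal_anti (h : m ≤ n) : orderIdeal n ≤ (orderIdeal m : Ideal (MvPowerSeries σ R)) :=
  fun _ hf => show ((m : ℕ) : ℕ∞) ≤ _ from le_trans (by exact_mod_cast h) hf

theorem mul_mem_orderIdeal (hf : f ∈ orderIdeal m) (hg : g ∈ orderIdeal n) :
    f * g ∈ orderIdeal (m + n) :=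
  show ((m + n : ℕ) : ℕ∞) ≤ _ by push_cast; exact (add_le_add hf hg).trans le_order_mul

theorem mem_orderIdeal_one_iff : f ∈ orderIdeal 1 ↔ constantCoeff f = 0 := by
  rw [← one_le_order_iff_constCoeff_eq_zero]; exact Iff.rfl

theorem constantCoeff_add_eq_zero {ι : Type*} {F H : ι → MvPowerSeries σ R}
    (hF : ∀ i, constantCoeff (F i) = 0) (hn : 1 ≤ n) (hH : ∀ i, H i ∈ orderIdeal n) (i : ι) :
    constantCoeff ((F + H) i) = 0 := by
  rw [Pi.add_apply, map_add, hF, mem_orderIdeal_one_iff.mp (orderIdeal_anti hn (hH i)), add_zero]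

theorem monomial_mem_orderIdeal (d : σ →₀ ℕ) (a : R) : monomial d a ∈ orderIdeal d.degree :=
  mem_orderIdeal_iff.mpr fun e he => by
    classical
    rw [coeff_monomial, if_neg (by rintro rfl; exact lt_irrefl _ he)]

theorem pderiv_mem_orderIdeal (i : σ) (hf : f ∈ orderIdeal (n + 1)) :
    pderiv R i f ∈ orderIdeal n :=
  mem_orderIdeal_iff.mpr fun d hd => by
    classical
    rw [coeff_pderiv, mem_orderIdeal_iff.mp hf _ (by simp [hd]), zero_mul]

theorem sub_truncTotal_mem_orderIdeal [Finite σ] (n : ℕ) (f : MvPowerSeries σ R) :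
    f - (truncTotal n f : MvPowerSeries σ R) ∈ orderIdeal n :=
  mem_orderIdeal_iff.mpr fun d hd => by
    rw [map_sub, MvPolynomial.coeff_coe, coeff_truncTotal _ hd, sub_self]

end OrderIdeal

section Subst

variable {σ τ R : Type*} [CommRing R] {a : σ → MvPowerSeries τ R}

theorem prod_pow_mem_orderIdeal (ha : ∀ s, constantCoeff (a s) = 0) (d : σ →₀ ℕ) :
    d.prod (fun s e => a s ^ e) ∈ orderIdeal d.degree := by
  show ((d.degree : ℕ) : ℕ∞) ≤ _
  refine le_trans ?_ (le_order_prod _ d.support)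
  rw [Finsupp.degree_apply, Nat.cast_sum]
  exact Finset.sum_le_sum fun s _ => le_order_pow_of_constantCoeff_eq_zero _ (ha s)

theorem subst_mem_orderIdeal [Finite σ] (ha : ∀ s, constantCoeff (a s) = 0) {n : ℕ}
    {f : MvPowerSeries σ R} (hf : f ∈ orderIdeal n) : subst a f ∈ orderIdeal n :=
  mem_orderIdeal_iff.mpr fun e he => by
    rw [coeff_subst (hasSubst_of_constantCoeff_zero ha)]
    refine finsum_eq_zero_of_forall_eq_zero fun d => ?_
    rcases lt_or_ge d.degree n with hd | hd
    · rw [mem_orderIdeal_iff.mp hf d hd, zero_smul]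
    · rw [mem_orderIdeal_iff.mp (prod_pow_mem_orderIdeal ha d) e (by omega), smul_zero]

end Subst

section Taylor

variable {σ τ R : Type*} [Fintype σ] [CommRing R] {F H : σ → MvPowerSeries τ R}

noncomputable def taylorRem (F H : σ → MvPowerSeries τ R) (f : MvPowerSeries σ R) :
    MvPowerSeries τ R :=
  subst (F + H) f - subst F f - ∑ s, subst F (pderiv R s f) * H s

theorem taylorRem_add (hF : ∀ s, constantCoeff (F s) = 0)
    (hFH : ∀ s, constantCoeff ((F + H) s) = 0) (f g : MvPowerSeries σ R) :
    taylorRem F H (f + g) = taylorRem F H f + taylorRem F H g := by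
  simp only [taylorRem, map_add, subst_add (hasSubst_of_constantCoeff_zero hF),
    subst_add (hasSubst_of_constantCoeff_zero hFH), add_mul, Finset.sum_add_distrib]
  ring

theorem taylorRem_mul (hF : ∀ s, constantCoeff (F s) = 0)
    (hFH : ∀ s, constantCoeff ((F + H) s) = 0) (f g : MvPowerSeries σ R) :
    taylorRem F H (f * g) = taylorRem F H f * subst (F + H) g + subst F f * taylorRem F H g +
      (∑ s, subst F (pderiv R s f) * H s) * (subst (F + H) g - subst F g) := by
  have h₀ := hasSubst_of_constantCoeff_zero hF
  simp only [taylorRem, Derivation.leibniz, smul_eq_mul, subst_mul h₀,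
    subst_mul (hasSubst_of_constantCoeff_zero hFH), subst_add h₀, add_mul, mul_assoc,
    Finset.sum_add_distrib, ← Finset.mul_sum]
  ring

theorem taylorRem_C (hF : ∀ s, constantCoeff (F s) = 0) (a : R) : taylorRem F H (C a) = 0 := by
  have h0 : subst F (0 : MvPowerSeries σ R) = 0 := by
    rw [← coe_substAlgHom (hasSubst_of_constantCoeff_zero hF), map_zero]
  simp [taylorRem, h0]

theorem taylorRem_X [DecidableEq σ] (hF : ∀ s, constantCoeff (F s) = 0)
    (hFH : ∀ s, constantCoeff ((F + H) s) = 0) (t : σ) : taylorRem F H (X t) = 0 := by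
  have h01 : ∀ s, subst F (if t = s then 1 else 0 : MvPowerSeries σ R) =
      if t = s then 1 else 0 := fun s => by
    rw [← coe_substAlgHom (hasSubst_of_constantCoeff_zero hF), apply_ite (substAlgHom _),
      map_one, map_zero]
  simp [taylorRem, pderiv_X, subst_X (hasSubst_of_constantCoeff_zero hF),
    subst_X (hasSubst_of_constantCoeff_zero hFH), Pi.single_apply, h01]

/-- For polynomials this follows from the Leibniz rule `taylorRem_mul`; a power series differs
from its truncation in degree `2 * c` by a term whose remainder already has order `2 * c`. -/
theorem taylorRem_mem_orderIdeal (hF : ∀ s, constantCoeff (F s) = 0) {c : ℕ} (hc : 1 ≤ c)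
    (hH : ∀ s, H s ∈ orderIdeal c) (f : MvPowerSeries σ R) :
    taylorRem F H f ∈ orderIdeal (2 * c) := by
  classical
  have hFH := constantCoeff_add_eq_zero hF hc hH
  have hlin : ∀ g, ∑ s, subst F (pderiv R s g) * H s ∈ orderIdeal c := fun g =>
    Ideal.sum_mem _ fun s _ => Ideal.mul_mem_left _ _ (hH s)
  have hpoly : ∀ p : MvPolynomial σ R, taylorRem F H p ∈ orderIdeal (2 * c) := by
    intro p
    induction p using MvPolynomial.induction_on with
    | C a => rw [MvPolynomial.coe_C, taylorRem_C hF]; exact zero_mem _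
    | add p q hp hq => rw [MvPolynomial.coe_add, taylorRem_add hF hFH]; exact add_mem hp hq
    | mul_X p t hp =>
      rw [MvPolynomial.coe_mul, MvPolynomial.coe_X, taylorRem_mul hF hFH, taylorRem_X hF hFH,
        subst_X (hasSubst_of_constantCoeff_zero hF),
        subst_X (hasSubst_of_constantCoeff_zero hFH), Pi.add_apply, add_sub_cancel_left,
        mul_zero, add_zero, two_mul]
      exact add_mem (Ideal.mul_mem_right _ _ (by rwa [two_mul] at hp))
        (mul_mem_orderIdeal (hlin p) (hH t))
  have htail : taylorRem F H (f - truncTotal (2 * c) f) ∈ orderIdeal (2 * c) := by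
    have hg := sub_truncTotal_mem_orderIdeal (2 * c) f
    refine sub_mem (sub_mem (subst_mem_orderIdeal hFH hg) (subst_mem_orderIdeal hF hg))
      (Ideal.sum_mem _ fun s _ => orderIdeal_anti (by omega : 2 * c ≤ 2 * c - 1 + c)
        (mul_mem_orderIdeal (subst_mem_orderIdeal hF (pderiv_mem_orderIdeal s ?_)) (hH s)))
    exact orderIdeal_anti (by omega) hg
  rw [← add_sub_cancel (truncTotal (2 * c) f : MvPowerSeries σ R) f, taylorRem_add hF hFH]
  exact add_mem (hpoly _) htail

end Taylor

end MvPowerSeries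

theorem fsubst_eq_subst {σ τ : Type*} [Fintype σ] [DecidableEq σ] {a : σ → MvPowerSeries τ ℂ}
    (ha : ∀ s, constantCoeff (a s) = 0) (f : MvPowerSeries σ ℂ) : fsubst a f = subst a f := by
  ext e
  rw [coeff_subst (hasSubst_of_constantCoeff_zero ha)]
  rw [finsum_eq_sum_of_support_subset _ (s := Finset.Iic
    (Finsupp.equivFunOnFinite.symm fun _ => e.degree)) ?_]
  · show coeff e (∑ m ∈ _, _) = _
    rw [map_sum]
    refine Finset.sum_congr rfl fun d _ => ?_
    rw [coeff_smul, Finsupp.prod_fintype _ _ (fun _ => pow_zero _)]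
    rfl
  · intro d hd
    rw [Function.mem_support] at hd
    have hdeg : d.degree ≤ e.degree := by
      by_contra! h
      exact hd (by rw [mem_orderIdeal_iff.mp (prod_pow_mem_orderIdeal ha d) e h, smul_zero])
    simpa [Finsupp.le_def] using fun s => (Finsupp.le_degree s d).trans hdeg

theorem Nat.succ_descFactorial_eq_add (b n : ℕ) :
    (b + 1).descFactorial n = b.descFactorial n + n * b.descFactorial (n - 1) := by
  cases n with
  | zero => simp
  | succ j =>
    rw [Nat.succ_descFactorial_succ, Nat.descFactorial_succ, Nat.add_sub_cancel, ← add_mul]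
    rcases le_or_gt j b with h | h
    · congr 1; omega
    · rw [Nat.descFactorial_eq_zero_iff_lt.mpr h, mul_zero, mul_zero]

section IterD

variable {σ : Type*} [Fintype σ]

theorem coeff_iterD (ν : σ →₀ ℕ) (f : MvPowerSeries σ ℂ) (m : σ →₀ ℕ) :
    coeff m (iterD ν f) = (∏ t, ((m t + ν t).descFactorial (ν t) : ℂ)) * coeff (m + ν) f := by
  rw [← Nat.cast_prod, ← Finsupp.prod_fintype _ _ (fun _ => by simp)]
  rfl

theorem prod_descFactorial_eq_mul_prod_erase [DecidableEq σ] {m ν m' ν' : σ →₀ ℕ} (s : σ)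
    (h : ∀ t ≠ s, m' t = m t ∧ ν' t = ν t) :
    ∏ t, ((m' t + ν' t).descFactorial (ν' t) : ℂ) =
      ((m' s + ν' s).descFactorial (ν' s) : ℂ) *
        ∏ t ∈ Finset.univ.erase s, ((m t + ν t).descFactorial (ν t) : ℂ) := by
  rw [← Finset.mul_prod_erase _ _ (Finset.mem_univ s)]
  refine congrArg _ (Finset.prod_congr rfl fun t ht => ?_)
  rw [(h t (Finset.ne_of_mem_erase ht)).1, (h t (Finset.ne_of_mem_erase ht)).2]

theorem iterD_X_mul [DecidableEq σ] (ν : σ →₀ ℕ) (s : σ) (f : MvPowerSeries σ ℂ) :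
    iterD ν (X s * f) = X s * iterD ν f + (ν s : ℂ) • iterD (ν - Finsupp.single s 1) f := by
  ext m
  have hoff : ∀ g : σ →₀ ℕ, ∀ t ≠ s, (g - Finsupp.single s 1 : σ →₀ ℕ) t = g t :=
    fun g t ht => by simp [Ne.symm ht]
  rw [map_add, coeff_smul, coeff_iterD, X_def, coeff_monomial_mul, coeff_monomial_mul,
    coeff_iterD, coeff_iterD, one_mul, one_mul,
    prod_descFactorial_eq_mul_prod_erase (m := m) (ν := ν) s fun _ _ => ⟨rfl, rfl⟩,
    prod_descFactorial_eq_mul_prod_erase s fun t ht => ⟨hoff m t ht, rfl⟩,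
    prod_descFactorial_eq_mul_prod_erase s fun t ht => ⟨rfl, hoff ν t ht⟩]
  simp only [Finsupp.single_le_iff, Finsupp.add_apply, Finsupp.tsub_apply,
    Finsupp.single_eq_same]
  rcases Nat.eq_zero_or_pos (ν s) with hν | hν
  · simp only [hν, Nat.cast_zero, zero_mul, add_zero, Nat.descFactorial_zero, Nat.cast_one,
      one_mul]
    split_ifs with hm
    · rw [tsub_add_eq_add_tsub (Finsupp.single_le_iff.mpr hm)]
    · rw [mul_zero]
  obtain ⟨j, hj⟩ : ∃ j, ν s = j + 1 := ⟨ν s - 1, by omega⟩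
  rw [if_pos (by omega),
    ← add_tsub_assoc_of_le (Finsupp.single_le_iff.mpr hν : Finsupp.single s 1 ≤ ν) m]
  split_ifs with hm
  · obtain ⟨b, hb⟩ : ∃ b, m s = b + 1 := ⟨m s - 1, by omega⟩
    rw [tsub_add_eq_add_tsub (Finsupp.single_le_iff.mpr hm), hb, hj,
      show b + 1 + (j + 1) = b + (j + 1) + 1 by omega, Nat.succ_descFactorial_eq_add,
      show b + 1 - 1 = b by omega, show b + 1 + (j + 1 - 1) = b + (j + 1) by omega]
    push_cast
    ring_nf
  · rw [show m s = 0 by omega, hj, zero_add, zero_add, Nat.add_sub_cancel,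
      Nat.succ_descFactorial_succ]
    push_cast
    ring_nf

theorem iterD_zero_left (f : MvPowerSeries σ ℂ) : iterD 0 f = f := by
  ext m; simp [coeff_iterD]

theorem iterD_zero_right (ν : σ →₀ ℕ) : iterD ν (0 : MvPowerSeries σ ℂ) = 0 := by
  ext m; simp [coeff_iterD]

theorem iterD_add (ν : σ →₀ ℕ) (f g : MvPowerSeries σ ℂ) :
    iterD ν (f + g) = iterD ν f + iterD ν g := by
  ext m; simp [coeff_iterD, mul_add]

theorem iterD_mem_orderIdeal (ν : σ →₀ ℕ) {c : ℕ} {f : MvPowerSeries σ ℂ}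
    (hf : f ∈ orderIdeal c) : iterD ν f ∈ orderIdeal (c - ν.degree) :=
  mem_orderIdeal_iff.mpr fun d hd => by
    rw [coeff_iterD, mem_orderIdeal_iff.mp hf _ (by rw [map_add]; omega), mul_zero]

end IterD

section LinearDiffOp

variable {σ J : Type*} [Fintype J]

/-- `P h = O(h²)` in the `X`-adic topology, up to a loss of `l` orders. -/
def VanishesQuadratically (l : ℕ) (P : MvPowerSeries σ ℂ → MvPowerSeries σ ℂ) : Prop :=
  ∀ c h, h ∈ orderIdeal c → P h ∈ orderIdeal (2 * (c - l))

noncomputable def linDiffOp (ν : J → σ →₀ ℕ) (B : J → MvPowerSeries σ ℂ)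
    (h : MvPowerSeries σ ℂ) : MvPowerSeries σ ℂ :=
  ∑ j, B j * iterD (ν j) h

theorem linDiffOp_X_mul_sub [Fintype σ] [DecidableEq σ] (ν : J → σ →₀ ℕ)
    (B : J → MvPowerSeries σ ℂ) (s : σ) (h : MvPowerSeries σ ℂ) :
    linDiffOp ν B (X s * h) - X s * linDiffOp ν B h =
      linDiffOp (fun j => ν j - Finsupp.single s 1) (fun j => (ν j s : ℂ) • B j) h := by
  simp only [linDiffOp, iterD_X_mul, mul_add, Finset.sum_add_distrib, Finset.mul_sum,
    mul_smul_comm, smul_mul_assoc, mul_left_comm (B _) (X s)]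
  abel

theorem VanishesQuadratically.commutator [Fintype σ] [DecidableEq σ] {l : ℕ} {ν : J → σ →₀ ℕ}
    {B : J → MvPowerSeries σ ℂ} (hP : VanishesQuadratically l (linDiffOp ν B)) (s : σ) :
    VanishesQuadratically l
      (linDiffOp (fun j => ν j - Finsupp.single s 1) (fun j => (ν j s : ℂ) • B j)) :=
  fun c h hh => by
    rw [← linDiffOp_X_mul_sub]
    exact sub_mem (hP c _ (Ideal.mul_mem_left _ _ hh)) (Ideal.mul_mem_left _ _ (hP c h hh))

theorem eq_zero_of_vanishesQuadratically_mul [Nonempty σ] {l : ℕ} {b : MvPowerSeries σ ℂ}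
    (hb : VanishesQuadratically l (b * ·)) : b = 0 := by
  classical
  ext e
  obtain ⟨s⟩ := ‹Nonempty σ›
  set c := e.degree + 2 * l + 1
  have hmem := hb c (monomial (Finsupp.single s c) 1)
    (by simpa using monomial_mem_orderIdeal (Finsupp.single s c) (1 : ℂ))
  have := mem_orderIdeal_iff.mp hmem (e + Finsupp.single s c)
    (by rw [map_add, Finsupp.degree_single]; omega)
  rwa [coeff_mul_monomial, if_pos le_add_self, add_tsub_cancel_right, mul_one] at this

theorem linDiffOp_eq_sum_fiber [DecidableEq σ] (ν : J → σ →₀ ℕ) (B : J → MvPowerSeries σ ℂ)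
    (h : MvPowerSeries σ ℂ) :
    linDiffOp ν B h = ∑ μ ∈ Finset.univ.image ν, (∑ j with ν j = μ, B j) * iterD μ h := by
  rw [linDiffOp, ← Finset.sum_fiberwise_of_maps_to (g := ν)
    (fun j _ => Finset.mem_image_of_mem ν (Finset.mem_univ j))]
  refine Finset.sum_congr rfl fun μ _ => ?_
  rw [Finset.sum_mul]
  exact Finset.sum_congr rfl fun j hj => by rw [(Finset.mem_filter.mp hj).2]

variable [DecidableEq σ]

theorem sum_fiber_eq_zero_of_forall_ne_zero [Fintype σ] [Nonempty σ] {l : ℕ}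
    {ν : J → σ →₀ ℕ} {B : J → MvPowerSeries σ ℂ} (hP : VanishesQuadratically l (linDiffOp ν B))
    (hne : ∀ μ ≠ 0, ∑ j with ν j = μ, B j = 0) (μ : σ →₀ ℕ) : ∑ j with ν j = μ, B j = 0 := by
  rcases eq_or_ne μ 0 with rfl | hμ
  · refine eq_zero_of_vanishesQuadratically_mul (l := l) fun c h hh => ?_
    have hmem := hP c h hh
    rwa [linDiffOp_eq_sum_fiber, Finset.sum_eq_single 0
      (fun μ _ hμ => by rw [hne μ hμ, zero_mul])
      (fun h0 => by
        rw [Finset.sum_eq_zero fun j hj => (h0 (Finset.mem_image.mpr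
          ⟨j, Finset.mem_univ j, (Finset.mem_filter.mp hj).2⟩)).elim, zero_mul]),
      iterD_zero_left] at hmem
  · exact hne μ hμ

theorem sum_fiber_commutator (ν : J → σ →₀ ℕ) (B : J → MvPowerSeries σ ℂ) {μ : σ →₀ ℕ} {s : σ}
    (hs : μ s ≠ 0) :
    ∑ j with ν j - Finsupp.single s 1 = μ - Finsupp.single s 1, (ν j s : ℂ) • B j =
      (μ s : ℂ) • ∑ j with ν j = μ, B j := by
  rw [Finset.sum_filter, Finset.sum_filter, Finset.smul_sum]
  refine Finset.sum_congr rfl fun j _ => ?_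
  by_cases hj : ν j = μ
  · simp [hj]
  rw [if_neg hj, smul_zero, ite_eq_right_iff]
  intro heq
  have : ν j s = 0 := by
    by_contra h0
    apply hj
    rw [← tsub_add_cancel_of_le (Finsupp.single_le_iff.mpr (Nat.one_le_iff_ne_zero.mpr h0)), heq,
      tsub_add_cancel_of_le (Finsupp.single_le_iff.mpr (Nat.one_le_iff_ne_zero.mpr hs))]
  simp [this]

/-- Induction on the order of the operator: its commutator with `X s` has coefficients
`ν s • B_ν` at `ν - single s 1`, and an operator of order zero is multiplication by its
coefficient. -/
theorem sum_fiber_eq_zero_of_vanishesQuadratically [Fintype σ] [Nonempty σ] {l : ℕ}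
    {ν : J → σ →₀ ℕ} {B : J → MvPowerSeries σ ℂ} (hP : VanishesQuadratically l (linDiffOp ν B)) :
    ∀ μ, ∑ j with ν j = μ, B j = 0 := by
  suffices key : ∀ N (ν : J → σ →₀ ℕ) (B : J → MvPowerSeries σ ℂ),
      (∀ j, N < (ν j).degree → B j = 0) → VanishesQuadratically l (linDiffOp ν B) →
        ∀ μ, ∑ j with ν j = μ, B j = 0 from
    key _ ν B (fun j hj => absurd (Finset.le_sup (f := fun j => (ν j).degree)
      (Finset.mem_univ j)) hj.not_ge) hP
  intro N
  induction N with
  | zero =>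
    refine fun ν B hB hP => sum_fiber_eq_zero_of_forall_ne_zero hP fun μ hμ =>
      Finset.sum_eq_zero fun j hj => hB j ?_
    rw [(Finset.mem_filter.mp hj).2]
    exact Nat.pos_of_ne_zero ((Finsupp.degree_eq_zero_iff μ).not.mpr hμ)
  | succ N ih =>
    refine fun ν B hB hP => sum_fiber_eq_zero_of_forall_ne_zero hP fun μ hμ => ?_
    obtain ⟨s, hs⟩ : ∃ s, μ s ≠ 0 := by
      by_contra! h
      exact hμ (Finsupp.ext h)
    have hlower := ih _ _ (fun j hj => ?_) (hP.commutator s) (μ - Finsupp.single s 1)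
    · rw [sum_fiber_commutator ν B hs] at hlower
      exact (smul_eq_zero.mp hlower).resolve_left (Nat.cast_ne_zero.mpr hs)
    · by_cases h0 : ν j s = 0
      · simp [h0]
      have hle : Finsupp.single s 1 ≤ ν j :=
        Finsupp.single_le_iff.mpr (Nat.one_le_iff_ne_zero.mpr h0)
      have hdeg := congrArg Finsupp.degree (tsub_add_cancel_of_le hle)
      rw [map_add, Finsupp.degree_single] at hdeg
      rw [hB j (by omega), smul_zero]

theorem eq_zero_of_vanishesQuadratically [Fintype σ] [Nonempty σ] {l : ℕ}
    {ν : J → σ →₀ ℕ} (hν : Function.Injective ν) {B : J → MvPowerSeries σ ℂ}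
    (hP : VanishesQuadratically l (linDiffOp ν B)) (j : J) : B j = 0 := by
  have := sum_fiber_eq_zero_of_vanishesQuadratically hP (ν j)
  rwa [Finset.sum_filter, Finset.sum_eq_single j (fun i _ hi => if_neg (hν.ne hi))
    (fun h => absurd (Finset.mem_univ j) h), if_pos rfl] at this

end LinearDiffOp

section CoeffPDeriv

variable {ι τ R : Type*} [CommRing R]

noncomputable def coeffPDeriv (i : τ) (u : MvPolynomial ι (MvPowerSeries τ R)) :
    MvPolynomial ι (MvPowerSeries τ R) :=
  AddMonoidAlgebra.map (pderiv R i).toLinearMap.toAddMonoidHom u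

@[simp]
theorem coeff_coeffPDeriv (i : τ) (u : MvPolynomial ι (MvPowerSeries τ R)) (m : ι →₀ ℕ) :
    MvPolynomial.coeff m (coeffPDeriv i u) = pderiv R i (MvPolynomial.coeff m u) :=
  MvPolynomial.coeff_addMonoidAlgebraMap ..

theorem coeffPDeriv_add (i : τ) (u v : MvPolynomial ι (MvPowerSeries τ R)) :
    coeffPDeriv i (u + v) = coeffPDeriv i u + coeffPDeriv i v := by
  ext m; simp

theorem coeffPDeriv_C (i : τ) (a : MvPowerSeries τ R) :
    coeffPDeriv i (MvPolynomial.C a : MvPolynomial ι _) = MvPolynomial.C (pderiv R i a) := by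
  classical
  ext m; simp [MvPolynomial.coeff_C, apply_ite (pderiv R i)]

theorem coeffPDeriv_mul_X (i : τ) (u : MvPolynomial ι (MvPowerSeries τ R)) (q : ι) :
    coeffPDeriv i (u * MvPolynomial.X q) = coeffPDeriv i u * MvPolynomial.X q := by
  classical
  ext m; simp [MvPolynomial.coeff_mul_X', apply_ite (pderiv R i)]

end CoeffPDeriv

section TaylorCoefficients

variable {ι τ R : Type*} [CommRing R] [IsDomain R] [CharZero R]

/-- In characteristic zero, the coefficients of `u ∈ R[[τ]][ι]` are, up to nonzero factors,
the constant terms of its iterated derivatives. -/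
theorem eq_zero_of_derivative_closed (P : MvPolynomial ι (MvPowerSeries τ R) → Prop)
    (hpderiv : ∀ u, P u → ∀ q, P (MvPolynomial.pderiv q u))
    (hcoeff : ∀ u, P u → ∀ i, P (coeffPDeriv i u))
    (hconst : ∀ u, P u → constantCoeff (MvPolynomial.coeff 0 u) = 0) {u} (hu : P u) : u = 0 := by
  classical
  suffices key : ∀ n u, P u → ∀ m d, m.degree + d.degree = n →
      coeff d (MvPolynomial.coeff m u) = 0 by
    ext m d
    exact key _ u hu m d rfl
  intro n
  induction n with
  | zero =>
    intro u hu m d hmd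
    rw [(Finsupp.degree_eq_zero_iff m).mp (by omega), (Finsupp.degree_eq_zero_iff d).mp (by omega),
      coeff_zero_eq_constantCoeff_apply, hconst u hu]
  | succ n ih =>
    intro u hu m d hmd
    rcases eq_or_ne m 0 with rfl | hm
    · obtain ⟨i, hi⟩ : ∃ i, d i ≠ 0 := by
        by_contra! h
        rw [show d = 0 from Finsupp.ext h] at hmd
        simp at hmd
      have hle : Finsupp.single i 1 ≤ d := Finsupp.single_le_iff.mpr (Nat.one_le_iff_ne_zero.mpr hi)
      have hdeg := congrArg Finsupp.degree (tsub_add_cancel_of_le hle)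
      rw [map_add, Finsupp.degree_single] at hdeg
      have := ih _ (hcoeff u hu i) 0 (d - Finsupp.single i 1) (by simp at hmd ⊢; omega)
      rw [coeff_coeffPDeriv, coeff_pderiv, tsub_add_cancel_of_le hle] at this
      refine (mul_eq_zero.mp this).resolve_right ?_
      exact_mod_cast (show (d - Finsupp.single i 1 : τ →₀ ℕ) i + 1 ≠ 0 by omega)
    · obtain ⟨q, hq⟩ : ∃ q, m q ≠ 0 := by
        by_contra! h
        exact hm (Finsupp.ext h)
      have hle : Finsupp.single q 1 ≤ m := Finsupp.single_le_iff.mpr (Nat.one_le_iff_ne_zero.mpr hq)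
      have hdeg := congrArg Finsupp.degree (tsub_add_cancel_of_le hle)
      rw [map_add, Finsupp.degree_single] at hdeg
      have := ih _ (hpderiv u hu q) (m - Finsupp.single q 1) d (by omega)
      rw [MvPolynomial.coeff_pderiv, tsub_add_cancel_of_le hle, ← Nat.cast_succ, ← map_natCast C,
        coeff_mul_C] at this
      exact (mul_eq_zero.mp this).resolve_right (Nat.cast_ne_zero.mpr (Nat.succ_ne_zero _))

end TaylorCoefficients

theorem HatIdx.degree_le {k l : ℕ} (q : HatIdx k l) : q.1.degree ≤ l := q.2.2

theorem HatIdx.val_ne_zero {k l : ℕ} (q : HatIdx k l) : q.1 ≠ 0 := fun h => by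
  simpa [h] using q.2.1

section Jet

variable {k r l : ℕ}

noncomputable def hatJet (F : Fin r → MvPowerSeries (Fin k) ℂ) (p : HatIdx k l × Fin r) :
    MvPowerSeries (Fin k) ℂ :=
  iterD p.1.1 (F p.2)

theorem jetEval_eq_eval₂ {F : Fin r → MvPowerSeries (Fin k) ℂ}
    (hF : ∀ i, constantCoeff (F i) = 0) (u : MixJet k r l) :
    jetEval u F =
      MvPolynomial.eval₂ (substAlgHom (hasSubst_of_constantCoeff_zero hF)).toRingHom
        (hatJet F) u := by
  rw [jetEval, MvPolynomial.eval₂, Finsupp.sum]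
  refine Finset.sum_congr rfl fun m _ => ?_
  rw [fsubst_eq_subst hF, ← coe_substAlgHom (hasSubst_of_constantCoeff_zero hF)]
  rfl

end Jet

section Linearization

variable {k r l : ℕ} {F H : Fin r → MvPowerSeries (Fin k) ℂ}

theorem jetEval_C (hF : ∀ i, constantCoeff (F i) = 0) (a : MvPowerSeries (Fin r) ℂ) :
    jetEval (MvPolynomial.C a : MixJet k r l) F = subst F a := by
  rw [jetEval_eq_eval₂ hF, MvPolynomial.eval₂_C, ← coe_substAlgHom]
  rfl

theorem jetEval_add (hF : ∀ i, constantCoeff (F i) = 0) (u v : MixJet k r l) :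
    jetEval (u + v) F = jetEval u F + jetEval v F := by
  simp only [jetEval_eq_eval₂ hF, MvPolynomial.eval₂_add]

theorem jetEval_mul_X (hF : ∀ i, constantCoeff (F i) = 0) (u : MixJet k r l)
    (q : HatIdx k l × Fin r) :
    jetEval (u * MvPolynomial.X q) F = jetEval u F * hatJet F q := by
  simp only [jetEval_eq_eval₂ hF, MvPolynomial.eval₂_mul, MvPolynomial.eval₂_X]

theorem jetEval_zero (F : Fin r → MvPowerSeries (Fin k) ℂ) : jetEval (0 : MixJet k r l) F = 0 := by
  simp [jetEval]

theorem hatJet_add (q : HatIdx k l × Fin r) : hatJet (F + H) q = hatJet F q + hatJet H q :=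
  iterD_add _ _ _

/-- The derivative of `F ↦ u(j^l F)` at `F` in the direction `H`. -/
noncomputable def jetEvalDeriv (u : MixJet k r l) (F H : Fin r → MvPowerSeries (Fin k) ℂ) :
    MvPowerSeries (Fin k) ℂ :=
  ∑ q, jetEval (MvPolynomial.pderiv q u) F * hatJet H q + ∑ i, jetEval (coeffPDeriv i u) F * H i

theorem jetEvalDeriv_C (hF : ∀ i, constantCoeff (F i) = 0) (a : MvPowerSeries (Fin r) ℂ) :
    jetEvalDeriv (MvPolynomial.C a : MixJet k r l) F H = ∑ i, subst F (pderiv ℂ i a) * H i := by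
  simp [jetEvalDeriv, jetEval_zero, coeffPDeriv_C, jetEval_C hF]

theorem jetEvalDeriv_add (hF : ∀ i, constantCoeff (F i) = 0) (u v : MixJet k r l) :
    jetEvalDeriv (u + v) F H = jetEvalDeriv u F H + jetEvalDeriv v F H := by
  simp only [jetEvalDeriv, map_add, coeffPDeriv_add, jetEval_add hF, add_mul,
    Finset.sum_add_distrib]
  ring

theorem jetEvalDeriv_mul_X (hF : ∀ i, constantCoeff (F i) = 0) (u : MixJet k r l)
    (q : HatIdx k l × Fin r) :
    jetEvalDeriv (u * MvPolynomial.X q) F H =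
      jetEvalDeriv u F H * hatJet F q + jetEval u F * hatJet H q := by
  simp only [jetEvalDeriv, jetEval_eq_eval₂ hF, Derivation.leibniz, smul_eq_mul,
    MvPolynomial.pderiv_X, MvPolynomial.eval₂_add, MvPolynomial.eval₂_mul, MvPolynomial.eval₂_X,
    coeffPDeriv_mul_X, Pi.single_apply, apply_ite (MvPolynomial.eval₂ _ _),
    MvPolynomial.eval₂_zero, mul_ite, mul_one, mul_zero, ite_mul,
    zero_mul, add_mul, Finset.sum_add_distrib, Finset.sum_ite_eq, Finset.mem_univ, if_true,
    Finset.sum_mul]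
  ring_nf

/-- The error is quadratic in `j^l H`, which has order `c - l`. -/
theorem jetEval_add_sub_sub_jetEvalDeriv_mem (hF : ∀ i, constantCoeff (F i) = 0) {c : ℕ}
    (hc : l < c) (hH : ∀ i, H i ∈ orderIdeal c) (u : MixJet k r l) :
    jetEval u (F + H) - jetEval u F - jetEvalDeriv u F H ∈ orderIdeal (2 * (c - l)) := by
  have hFH := constantCoeff_add_eq_zero hF (by omega) hH
  have hjet : ∀ q : HatIdx k l × Fin r, hatJet H q ∈ orderIdeal (c - l) := fun q =>
    orderIdeal_anti (by have := q.1.degree_le; omega) (iterD_mem_orderIdeal _ (hH q.2))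
  have hlin : ∀ u : MixJet k r l, jetEvalDeriv u F H ∈ orderIdeal (c - l) := fun u =>
    add_mem (Ideal.sum_mem _ fun q _ => Ideal.mul_mem_left _ _ (hjet q))
      (Ideal.sum_mem _ fun i _ => Ideal.mul_mem_left _ _ (orderIdeal_anti (by omega) (hH i)))
  induction u using MvPolynomial.induction_on with
  | C a =>
    rw [jetEval_C hFH, jetEval_C hF, jetEvalDeriv_C hF]
    exact orderIdeal_anti (by omega) (taylorRem_mem_orderIdeal hF (by omega) hH a)
  | add u v hu hv =>
    rw [jetEval_add hFH, jetEval_add hF, jetEvalDeriv_add hF]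
    convert add_mem hu hv using 1
    ring
  | mul_X u q hu =>
    rw [jetEval_mul_X hFH, jetEval_mul_X hF, jetEvalDeriv_mul_X hF, hatJet_add]
    convert add_mem (Ideal.mul_mem_right (hatJet F q + hatJet H q) _ hu)
      (two_mul (c - l) ▸ mul_mem_orderIdeal (hlin u) (hjet q)) using 1
    ring

end Linearization

section Closure

variable {k r l : ℕ}

def VanishesOnJets (u : MixJet k r l) : Prop :=
  ∀ F : Fin r → MvPowerSeries (Fin k) ℂ, (∀ i, constantCoeff (F i) = 0) → jetEval u F = 0

theorem VanishesOnJets.constantCoeff_coeff_zero {u : MixJet k r l} (hu : VanishesOnJets u) :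
    constantCoeff (MvPolynomial.coeff 0 u) = 0 := by
  have h := hu 0 fun _ => map_zero _
  have hjet : hatJet (0 : Fin r → MvPowerSeries (Fin k) ℂ) = (0 : HatIdx k l × Fin r → _) :=
    funext fun q => iterD_zero_right _
  rw [jetEval_eq_eval₂ (F := 0) fun _ => map_zero _, hjet, MvPolynomial.eval₂_zero_apply] at h
  simpa [MvPolynomial.constantCoeff_eq, subst_zero_eq_C_constantCoeff] using
    congrArg constantCoeff h

/-- The multi-index `ν` of the jet coordinate `Λ_ν`; `none` stands for `Λ₀`. -/
def jetMultiIndex : Option (HatIdx k l) → Fin k →₀ ℕ := fun j => j.elim 0 Subtype.val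

theorem jetMultiIndex_injective : Function.Injective (jetMultiIndex (k := k) (l := l)) := by
  rintro (_ | q) (_ | q') h
  · rfl
  · exact absurd h.symm q'.val_ne_zero
  · exact absurd h q.val_ne_zero
  · exact congrArg some (Subtype.ext h)

/-- The partial derivatives `∂u/∂Λ_{ν,i}`, `|ν| ≤ l`, evaluated at `j^l F`. -/
noncomputable def jetPartials (u : MixJet k r l) (F : Fin r → MvPowerSeries (Fin k) ℂ)
    (i : Fin r) : Option (HatIdx k l) → MvPowerSeries (Fin k) ℂ := fun j =>
  j.elim (jetEval (coeffPDeriv i u) F) fun q => jetEval (MvPolynomial.pderiv (q, i) u) F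

theorem jetEvalDeriv_single (u : MixJet k r l) (F : Fin r → MvPowerSeries (Fin k) ℂ) (i : Fin r)
    (h : MvPowerSeries (Fin k) ℂ) :
    jetEvalDeriv u F (Pi.single i h) = linDiffOp jetMultiIndex (jetPartials u F i) h := by
  simp only [jetEvalDeriv, linDiffOp, jetMultiIndex, jetPartials, hatJet, Fintype.sum_option,
    Option.elim, iterD_zero_left, Fintype.sum_prod_type, Pi.single_apply, apply_ite (iterD _),
    iterD_zero_right, mul_ite, mul_zero, Finset.sum_ite_eq', Finset.mem_univ, if_true]
  ring

theorem VanishesOnJets.vanishesQuadratically {u : MixJet k r l} (hu : VanishesOnJets u)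
    {F : Fin r → MvPowerSeries (Fin k) ℂ} (hF : ∀ i, constantCoeff (F i) = 0) (i : Fin r) :
    VanishesQuadratically l (linDiffOp jetMultiIndex (jetPartials u F i)) := by
  intro c h hh
  rcases le_or_gt c l with hcl | hcl
  · rw [Nat.sub_eq_zero_of_le hcl, mul_zero, orderIdeal_zero]
    trivial
  have hH : ∀ i', (Pi.single i h : Fin r → MvPowerSeries (Fin k) ℂ) i' ∈ orderIdeal c :=
    fun i' => by
      rw [Pi.single_apply]
      split_ifs
      exacts [hh, zero_mem _]
  have := jetEval_add_sub_sub_jetEvalDeriv_mem hF hcl hH u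
  rwa [hu _ (constantCoeff_add_eq_zero hF (by omega) hH), hu F hF, sub_zero, zero_sub,
    neg_mem_iff, jetEvalDeriv_single] at this

theorem VanishesOnJets.jetPartials_eq_zero (hk : 0 < k) {u : MixJet k r l}
    (hu : VanishesOnJets u) {F : Fin r → MvPowerSeries (Fin k) ℂ}
    (hF : ∀ i, constantCoeff (F i) = 0) (i : Fin r) (j : Option (HatIdx k l)) :
    jetPartials u F i j = 0 :=
  have : Nonempty (Fin k) := ⟨⟨0, hk⟩⟩
  eq_zero_of_vanishesQuadratically jetMultiIndex_injective (hu.vanishesQuadratically hF i) j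

theorem VanishesOnJets.pderiv (hk : 0 < k) {u : MixJet k r l} (hu : VanishesOnJets u)
    (q : HatIdx k l × Fin r) : VanishesOnJets (MvPolynomial.pderiv q u) :=
  fun _ hF => hu.jetPartials_eq_zero hk hF q.2 (some q.1)

theorem VanishesOnJets.coeffPDeriv (hk : 0 < k) {u : MixJet k r l} (hu : VanishesOnJets u)
    (i : Fin r) : VanishesOnJets (coeffPDeriv i u) :=
  fun _ hF => hu.jetPartials_eq_zero hk hF i none

end Closure

theorem jet_eval_eq_zero_unique_general {k r l : ℕ} (hk : 0 < k)
    (u : MixJet k r l)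
    (hu : ∀ F : Fin r → MvPowerSeries (Fin k) ℂ,
      (∀ i, MvPowerSeries.constantCoeff (F i) = 0) → jetEval u F = 0) :
    u = 0 :=
  eq_zero_of_derivative_closed VanishesOnJets (fun _ hv => hv.pderiv hk)
    (fun _ hv => hv.coeffPDeriv hk) (fun _ hv => hv.constantCoeff_coeff_zero) hu

/-- Uniqueness lemma for jet-space functions: if `u ∈ ℂ[[Λ₀]][Λ̂]` vanishes on the
`l`-jet `j^l_x F` of every formal map `F : (ℂ^k,0) → (ℂ^r,0)`, then `u = 0`. -/
theorem jet_eval_eq_zero_unique {k r l : ℕ} (hk : 0 < k) (hr : 0 < r)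
    (u : MixJet k r l)
    (hu : ∀ F : Fin r → MvPowerSeries (Fin k) ℂ,
      (∀ i, MvPowerSeries.constantCoeff (F i) = 0) → jetEval u F = 0) :
    u = 0 :=
  jet_eval_eq_zero_unique_general hk u hu
end

section
/- Let $F : (\mathbb{C}^k_x,0) \to (\mathbb{C}^{k'}_{x'},0)$ and $G : (\mathbb{C}^{k'}_{x'},0) \to \mathbb{C}$ be formal power series maps with $G \neq 0$, and suppose the generic rank of $F$ is $k'$ (i.e., some $k' \times k'$ minor of $\partial F/\partial x$ is a nonzero formal power series). Then $G \circ F \neq 0$ in $\mathbb{C}[[x]]$. -/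
open MvPowerSeries

/-- The formal partial derivative `∂f/∂x_s` of a formal power series. -/
noncomputable def pd {σ : Type*} (s : σ) (f : MvPowerSeries σ ℂ) : MvPowerSeries σ ℂ :=
  fun m => ((m s : ℂ) + 1) * MvPowerSeries.coeff (m + Finsupp.single s 1) f

/-- A formal power series is convergent if its coefficients grow at most
geometrically. -/
def Convergent {σ : Type*} (f : MvPowerSeries σ ℂ) : Prop :=
  ∃ C r : ℝ, 0 < r ∧ ∀ m : σ →₀ ℕ,
    ‖MvPowerSeries.coeff m f‖ ≤ C * r ^ (m.sum fun _ e => e)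

/-!
Write `Φ = subst F`. Since `F` has no constant terms, `Φ` preserves constant coefficients, and by
the chain rule `∂ⱼ (Φ H) = ∑ᵢ Φ (∂ᵢ H) · ∂ⱼ Fᵢ`. If `Φ H = 0`, the vector `(Φ (∂ᵢ H))ᵢ` is therefore
killed by a Jacobian minor of `F` with nonzero determinant, so it vanishes: the kernel of `Φ` is
closed under all partial derivatives. Every element of the kernel then has all iterated
derivatives with vanishing constant term, which in characteristic zero forces it to be `0`.
-/

namespace MvPowerSeries

variable {σ τ R : Type*}

section CommSemiring

variable [CommSemiring R]

theorem coeff_prod_pow_eq_zero_of_degree_lt {a : σ → MvPowerSeries τ R}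
    (ha : ∀ s, constantCoeff (a s) = 0) {m : σ →₀ ℕ} {e : τ →₀ ℕ}
    (h : e.degree < m.degree) : coeff e (m.prod fun s k => a s ^ k) = 0 := by
  apply coeff_of_lt_order
  calc (e.degree : ℕ∞) < m.degree := by exact_mod_cast h
    _ = ∑ s ∈ m.support, (m s : ℕ∞) := by simp [Finsupp.degree_apply]
    _ ≤ ∑ s ∈ m.support, (a s ^ m s).order :=
      Finset.sum_le_sum fun s _ => le_order_pow_of_constantCoeff_eq_zero _ (ha s)
    _ ≤ _ := le_order_prod _ _

theorem WithPiTopology.continuous_pderiv [TopologicalSpace R] [IsTopologicalSemiring R] (i : σ) :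
    Continuous (pderiv R i : MvPowerSeries σ R → MvPowerSeries σ R) :=
  continuous_pi fun n => by
    simp_rw [← coeff_apply, coeff_pderiv]
    exact (continuous_coeff R _).mul continuous_const

theorem pderiv_aeval [Fintype σ] (a : σ → MvPowerSeries τ R) (p : MvPolynomial σ R) (j : τ) :
    pderiv R j (MvPolynomial.aeval a p) =
      ∑ i, MvPolynomial.aeval a (MvPolynomial.pderiv i p) * pderiv R j (a i) := by
  classical
  induction p using MvPolynomial.induction_on with
  | C r => simp
  | add p q hp hq => simp [hp, hq, add_mul, Finset.sum_add_distrib]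
  | mul_X p i hp =>
    simp only [map_mul, MvPolynomial.aeval_X, Derivation.leibniz, hp, smul_eq_mul,
      MvPolynomial.pderiv_X, Pi.single_apply, mul_ite, mul_one, mul_zero, map_add, add_mul,
      Finset.sum_add_distrib, apply_ite (MvPolynomial.aeval a), map_zero, ite_mul, zero_mul,
      Finset.sum_ite_eq, Finset.mem_univ, if_true, Finset.mul_sum, mul_assoc]

end CommSemiring

section CommRing

variable [CommRing R]

theorem constantCoeff_subst_of_constantCoeff_zero [Finite σ] {a : σ → MvPowerSeries τ R}
    (ha : ∀ s, constantCoeff (a s) = 0) (f : MvPowerSeries σ R) :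
    constantCoeff (subst a f) = constantCoeff f := by
  rw [constantCoeff_subst (hasSubst_of_constantCoeff_zero ha), finsum_eq_single _ 0]
  · simp
  · intro m hm
    rw [← coeff_zero_eq_constantCoeff_apply, coeff_prod_pow_eq_zero_of_degree_lt ha, smul_zero]
    simpa [pos_iff_ne_zero, Finsupp.degree_eq_zero_iff] using hm

/-- Both sides are continuous in `f` for the product topology (with `R` discrete), so it suffices
to check the identity on the dense subset of polynomials. -/
theorem pderiv_subst [Fintype σ] {a : σ → MvPowerSeries τ R} (ha : HasSubst a)
    (f : MvPowerSeries σ R) (j : τ) :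
    pderiv R j (subst a f) = ∑ i, subst a (pderiv R i f) * pderiv R j (a i) := by
  let _ : UniformSpace R := ⊥
  open WithPiTopology in
  refine congrFun (Continuous.ext_on denseRange_toMvPowerSeries
    ((continuous_pderiv j).comp (continuous_subst ha))
    (continuous_finsetSum _ fun i _ =>
      ((continuous_subst ha).comp (continuous_pderiv i)).mul continuous_const) ?_) f
  rintro _ ⟨p, rfl⟩
  simpa only [Function.comp_apply, Finset.sum_apply, Pi.mul_apply, subst_coe, pderiv_coe]
    using pderiv_aeval a p j

open Matrix in
theorem subst_pderiv_eq_zero_of_subst_eq_zero [NoZeroDivisors R] [Fintype σ] [DecidableEq σ]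
    {a : σ → MvPowerSeries τ R} (ha : HasSubst a) {cols : σ → τ}
    (hdet : Matrix.det (fun i j => pderiv R (cols j) (a i)) ≠ 0)
    {f : MvPowerSeries σ R} (hf : subst a f = 0) (i : σ) :
    subst a (pderiv R i f) = 0 := by
  have hker : (fun i => subst a (pderiv R i f)) ᵥ* (fun i j => pderiv R (cols j) (a i)) = 0 := by
    funext j
    simp only [Matrix.vecMul, dotProduct, Pi.zero_apply, ← pderiv_subst ha, hf, map_zero]
  exact congrFun (Matrix.eq_zero_of_vecMul_eq_zero hdet hker) i

theorem eq_zero_of_pderiv_closed [NoZeroDivisors R] [CharZero R]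
    {P : MvPowerSeries σ R → Prop} (hP : ∀ f, P f → ∀ i, P (pderiv R i f))
    (hP₀ : ∀ f, P f → constantCoeff f = 0) {f : MvPowerSeries σ R} (hf : P f) : f = 0 := by
  ext ν
  induction ν using WellFoundedLT.induction generalizing f with
  | ind ν ih =>
    rcases eq_or_ne ν 0 with rfl | hν
    · simpa using hP₀ f hf
    obtain ⟨i, hi⟩ := Finsupp.ne_iff.mp hν
    have hle : Finsupp.single i 1 ≤ ν := Finsupp.single_le_iff.mpr (Nat.one_le_iff_ne_zero.mpr hi)
    have hlt : ν - Finsupp.single i 1 < ν := by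
      conv_rhs => rw [← tsub_add_cancel_of_le hle]
      exact lt_add_of_pos_right _ (pos_iff_ne_zero.mpr (by simp))
    have hcoeff := ih _ hlt (hP f hf i)
    rw [coeff_pderiv, tsub_add_cancel_of_le hle, map_zero] at hcoeff
    exact (mul_eq_zero.mp hcoeff).resolve_right (Nat.cast_add_one_ne_zero _)

end CommRing

end MvPowerSeries

theorem pd_eq_pderiv {σ : Type*} (s : σ) (f : MvPowerSeries σ ℂ) : pd s f = pderiv ℂ s f := by
  ext m
  exact mul_comm _ _

/-- A formal map `F : (ℂᵏ,0) → (ℂᵏ',0)` of full generic rank `k'` (some `k' × k'`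
minor of its Jacobian is a nonzero formal power series) pulls back nonzero formal power
series to nonzero formal power series: if `G ≠ 0` then `G ∘ F ≠ 0`. -/
theorem comp_ne_zero_of_generic_rank_full {k k' : ℕ}
    (F : Fin k' → MvPowerSeries (Fin k) ℂ)
    (hF0 : ∀ i, MvPowerSeries.constantCoeff (F i) = 0)
    (hrk : ∃ cols : Fin k' ↪ Fin k,
      Matrix.det (fun i j => pd (cols j) (F i)) ≠ 0)
    (G : MvPowerSeries (Fin k') ℂ) (hG : G ≠ 0) :
    fsubst F G ≠ 0 := by
  obtain ⟨cols, hdet⟩ := hrk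
  simp only [pd_eq_pderiv] at hdet
  have hF := hasSubst_of_constantCoeff_zero hF0
  rw [fsubst_eq_subst hF0]
  exact fun hFG => hG <| eq_zero_of_pderiv_closed (P := fun H => subst F H = 0)
    (fun _ hH => subst_pderiv_eq_zero_of_subst_eq_zero hF hdet hH)
    (fun H hH => by rw [← constantCoeff_subst_of_constantCoeff_zero hF0 H, hH, map_zero]) hFG
end
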